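/- The ℂ-subalgebra of the algebra of polynomial functions on M_{2n}(ℂ) generated by {δ_C : C ∈ 𝓛} is spanned, as a ℂ-vector space, by the standard monomials δ_Δ as Δ ranges over all multichains in 𝓛 (including the empty product 1). -/

import Mathlib

noncomputable section

namespace SpBranch


/-! Elements of `Fin (2*n)` carry the 1-based label `(x : ℕ) + 1`. -/

/-- The column set `I_i = {1, …, i}` (1-based labels). -/
def Iset (n i : ℕ) : Finset (Fin (2*n)) :=
  Finset.univ.filter (fun x => (x : ℕ) + 1 ≤ i)

/-- The column set `J_j = {1, …, j} ∪ {n}` (1-based labels). -/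
def Jset (n j : ℕ) : Finset (Fin (2*n)) :=
  Finset.univ.filter (fun x => (x : ℕ) + 1 ≤ j ∨ (x : ℕ) + 1 = n)

/-- The column set `J′_j = {1, …, j} ∪ {n+1}` (1-based labels). -/
def JPset (n j : ℕ) : Finset (Fin (2*n)) :=
  Finset.univ.filter (fun x => (x : ℕ) + 1 ≤ j ∨ (x : ℕ) + 1 = n + 1)

/-- The column set `K_k = {1, …, k} ∪ {n, n+1}` (1-based labels). -/
def Kset (n k : ℕ) : Finset (Fin (2*n)) :=
  Finset.univ.filter (fun x => (x : ℕ) + 1 ≤ k ∨ (x : ℕ) + 1 = n ∨ (x : ℕ) + 1 = n + 1)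

/-- The underlying set of the poset `𝓛`. -/
def LSet (n : ℕ) : Set (Finset (Fin (2*n))) :=
  {C | (∃ i, 1 ≤ i ∧ i ≤ n - 1 ∧ C = Iset n i) ∨
       (∃ j, j ≤ n - 1 ∧ C = Jset n j) ∨
       (∃ j, j ≤ n - 1 ∧ C = JPset n j) ∨
       (∃ k, k ≤ n - 2 ∧ C = Kset n k)}

/-- The generating relations of the partial order `⪯` on `𝓛`:
`J_i ⪯ J′_i ⪯ I_i ⪯ J_{i−1}`, `J′_i ⪯ K_{i−1} ⪯ J_{i−1}`, `J_{i−1} ⪯ J′_{i−1}` for `1 ≤ i ≤ n−1`. -/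
def LGen (n : ℕ) (C C' : Finset (Fin (2*n))) : Prop :=
  ∃ i, 1 ≤ i ∧ i ≤ n - 1 ∧
    ((C = Jset n i ∧ C' = JPset n i) ∨
     (C = JPset n i ∧ C' = Iset n i) ∨
     (C = JPset n i ∧ C' = Kset n (i-1)) ∨
     (C = Iset n i ∧ C' = Jset n (i-1)) ∨
     (C = Kset n (i-1) ∧ C' = Jset n (i-1)) ∨
     (C = Jset n (i-1) ∧ C' = JPset n (i-1)))

/-- The partial order `⪯` on `𝓛`, generated by `LGen`. -/
def LLE (n : ℕ) : Finset (Fin (2*n)) → Finset (Fin (2*n)) → Prop :=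
  Relation.ReflTransGen (LGen n)

/-- A multichain in `𝓛`: a finite weakly increasing sequence of elements of `𝓛`. -/
def IsMultichain (n : ℕ) (l : List (Finset (Fin (2*n)))) : Prop :=
  (∀ C ∈ l, C ∈ LSet n) ∧ l.Chain' (LLE n)

/-- `δ_C`: the minor of `X` on rows `1, …, |C|` and columns `C`. -/
def deltaFn (n : ℕ) (C : Finset (Fin (2*n))) (X : Matrix (Fin (2*n)) (Fin (2*n)) ℂ) : ℂ :=
  Matrix.det (Matrix.of fun i j : Fin C.card =>
    X (Fin.castLE (le_trans C.card_le_univ (by simp)) i) ((C.orderIsoOfFin rfl j).1))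

/-- The standard monomial `δ_Δ = δ_{C_1} ⋯ δ_{C_r}` attached to a list `Δ = (C_1, …, C_r)`. -/
def stdMonomial (n : ℕ) (l : List (Finset (Fin (2*n)))) (X : Matrix (Fin (2*n)) (Fin (2*n)) ℂ) : ℂ :=
  (l.map (fun C => deltaFn n C X)).prod

/-- `f_i = #{j : |C_j| ≥ i}` for a list of column sets. -/
def shapeF (n : ℕ) (l : List (Finset (Fin (2*n)))) (i : ℕ) : ℕ :=
  (l.map (fun C => if i ≤ C.card then 1 else 0)).sum

/-- `d_k` = total number of occurrences of the (1-based) label `k` among the entries of the `C_j`. -/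
def shapeD (n : ℕ) (l : List (Finset (Fin (2*n)))) (k : ℕ) : ℕ :=
  (l.map (fun C => if ∃ x : Fin (2*n), x ∈ C ∧ (x : ℕ) + 1 = k then 1 else 0)).sum

/-- `Δ` has shape `F/D` (with `F = (f_1, …, f_n)`, `D = (d_1, …, d_{n-1})`, read as functions
on 1-based indices). -/
def HasShape (n : ℕ) (l : List (Finset (Fin (2*n)))) (d f : ℕ → ℕ) : Prop :=
  (∀ i, 1 ≤ i → shapeF n l i = f i) ∧ (∀ k, 1 ≤ k → k ≤ n - 1 → shapeD n l k = d k)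

/-- A Young diagram with at most `m` rows, recorded as a function on 1-based indices. -/
def IsYoung (m : ℕ) (a : ℕ → ℕ) : Prop :=
  (∀ j k, 1 ≤ j → j ≤ k → a k ≤ a j) ∧ (∀ k, m < k → a k = 0)

/-- `A ⊑ B` : `b_i ≥ a_i ≥ b_{i+1}` for all `i ≥ 1`. -/
def Interlaces (a b : ℕ → ℕ) : Prop :=
  ∀ i, 1 ≤ i → a i ≤ b i ∧ b (i+1) ≤ a i

/-- The skew-symmetric Gram matrix `[[0, Q_n], [−Q_n, 0]]`. -/
def Jmat (n : ℕ) : Matrix (Fin (2*n)) (Fin (2*n)) ℂ :=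
  Matrix.of fun i j =>
    if (i : ℕ) + (j : ℕ) + 1 = 2*n then (if (i : ℕ) < n then 1 else -1) else 0

/-- `G_n = Sp_{2n}(ℂ)`, as a set of matrices. -/
def SpSet (n : ℕ) : Set (Matrix (Fin (2*n)) (Fin (2*n)) ℂ) :=
  {g | IsUnit g ∧ g.transpose * Jmat n * g = Jmat n}

/-- `U_n⁻`: lower triangular matrices in `G_n` with 1's on the diagonal. -/
def UnMinusSet (n : ℕ) : Set (Matrix (Fin (2*n)) (Fin (2*n)) ℂ) :=
  {g | g ∈ SpSet n ∧ (∀ i j : Fin (2*n), i < j → g i j = 0) ∧ (∀ i, g i i = 1)}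

/-- `U_{n−1}`: the image in `G_n` of the upper triangular unipotent subgroup of `G_{n−1}`,
under the embedding `[[A,B],[C,D]] ↦ [[A,0,B],[0,I_2,0],[C,0,D]]`; equivalently, upper
triangular unipotent elements of `G_n` whose rows and columns with (1-based) indices
`n` and `n+1` agree with the identity matrix. -/
def Un1Set (n : ℕ) : Set (Matrix (Fin (2*n)) (Fin (2*n)) ℂ) :=
  {g | g ∈ SpSet n ∧ (∀ i j : Fin (2*n), j < i → g i j = 0) ∧ (∀ i, g i i = 1) ∧
    (∀ i j : Fin (2*n), ((i : ℕ) + 1 = n ∨ (i : ℕ) = n ∨ (j : ℕ) + 1 = n ∨ (j : ℕ) = n) →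
      g i j = if i = j then 1 else 0)}

/-- `fb` is the restriction to `G_n` of a polynomial function on `M_{2n}(ℂ)`. -/
def IsPolyFn (n : ℕ) (fb : ↥(SpSet n) → ℂ) : Prop :=
  ∃ P : MvPolynomial (Fin (2*n) × Fin (2*n)) ℂ,
    ∀ x : ↥(SpSet n),
      fb x = MvPolynomial.eval (fun rc => (x : Matrix (Fin (2*n)) (Fin (2*n)) ℂ) rc.1 rc.2) P

/-- `fb(u⁻¹ x v) = fb(x)` for `u ∈ U_n⁻`, `v ∈ U_{n−1}`. -/
def IsUInvariant (n : ℕ) (fb : ↥(SpSet n) → ℂ) : Prop :=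
  ∀ u ∈ UnMinusSet n, ∀ v ∈ Un1Set n, ∀ x y : ↥(SpSet n),
    (y : Matrix (Fin (2*n)) (Fin (2*n)) ℂ) =
      u⁻¹ * (x : Matrix (Fin (2*n)) (Fin (2*n)) ℂ) * v → fb y = fb x

/-- The branching algebra `B`, as a set of functions on `G_n`. -/
def BSet (n : ℕ) : Set (↥(SpSet n) → ℂ) :=
  {fb | IsPolyFn n fb ∧ IsUInvariant n fb}

/-- `t = diag(t_1, …, t_n, t_n⁻¹, …, t_1⁻¹)` (1-based data `t : ℕ → ℂ`). -/
def torusT (n : ℕ) (t : ℕ → ℂ) : Matrix (Fin (2*n)) (Fin (2*n)) ℂ :=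
  Matrix.diagonal (fun p => if (p : ℕ) + 1 ≤ n then t ((p : ℕ) + 1) else (t (2*n - (p : ℕ)))⁻¹)

/-- `s = diag(s_1, …, s_{n−1}, 1, 1, s_{n−1}⁻¹, …, s_1⁻¹)` (1-based data `s : ℕ → ℂ`). -/
def torusS (n : ℕ) (s : ℕ → ℂ) : Matrix (Fin (2*n)) (Fin (2*n)) ℂ :=
  Matrix.diagonal (fun p => if (p : ℕ) + 1 ≤ n - 1 then s ((p : ℕ) + 1)
    else if (p : ℕ) + 1 = n ∨ (p : ℕ) = n then 1 else (s (2*n - (p : ℕ)))⁻¹)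



/-- The weight `wt(C) = Σ_r c_r N^{n−r}` of a column set (1-based entries `c_1 < c_2 < …`). -/
def wtC (n N : ℕ) (C : Finset (Fin (2*n))) : ℕ :=
  ∑ r : Fin C.card, (((C.orderIsoOfFin rfl r).1 : ℕ) + 1) * N ^ (n - ((r : ℕ) + 1))

/-- A pair of Young diagrams `(D, F)` is of order type `σ` (where `σ i = true` means `≥`,
`σ i = false` means `≤`): for `1 ≤ i ≤ n−1`, `σ_i = ≥` implies `d_i ≥ f_{i+1}` and
`σ_i = ≤` implies `d_i ≤ f_{i+1}`. -/
def OfOrderType (n : ℕ) (σ : ℕ → Bool) (d f : ℕ → ℕ) : Prop :=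
  ∀ i, 1 ≤ i → i ≤ n - 1 →
    (σ i = true → f (i+1) ≤ d i) ∧ (σ i = false → d i ≤ f (i+1))

/-- The underlying set of the poset `Γ`: pairs `(i, j)` with `i ∈ {n−1, n, n+1}`,
`1 ≤ j ≤ min i n`, representing `t_j^{(i)}`. -/
def GammaCond (n : ℕ) (q : ℕ × ℕ) : Prop :=
  (q.1 = n - 1 ∨ q.1 = n ∨ q.1 = n + 1) ∧ 1 ≤ q.2 ∧ q.2 ≤ min q.1 n

instance (n : ℕ) : DecidablePred (GammaCond n) := fun q => by unfold GammaCond; infer_instance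

def Gamma (n : ℕ) := {q : ℕ × ℕ // GammaCond n q}

instance (n : ℕ) : DecidableEq (Gamma n) := Subtype.instDecidableEq

/-- The partial order on `Γ`, generated by `t_j^{(i+1)} ≥ t_j^{(i)}` and
`t_j^{(i)} ≥ t_{j+1}^{(i+1)}`. -/
def GammaLE (n : ℕ) : Gamma n → Gamma n → Prop :=
  Relation.ReflTransGen (fun a b =>
    (b.1.1 = a.1.1 + 1 ∧ b.1.2 = a.1.2) ∨ (a.1.1 = b.1.1 + 1 ∧ a.1.2 = b.1.2 + 1))

/-- Order-decreasing subset (down-set) of `Γ`. -/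
def IsDownSet (n : ℕ) (S : Set (Gamma n)) : Prop :=
  ∀ x ∈ S, ∀ y, GammaLE n y x → y ∈ S

/-- `m_C(k) = #{c ∈ C : c ≤ k}` (1-based labels). -/
def mC (n : ℕ) (C : Finset (Fin (2*n))) (k : ℕ) : ℕ :=
  (C.filter (fun x : Fin (2*n) => (x : ℕ) + 1 ≤ k)).card

/-- `S_C = ∪_k {t_1^{(k)}, …, t_{m_C(k)}^{(k)}} ⊆ Γ`. -/
def SCset (n : ℕ) (C : Finset (Fin (2*n))) : Set (Gamma n) :=
  {q | q.1.2 ≤ mC n C q.1.1}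

/-- The characteristic function `χ_{S_C} : Γ → ℕ`. -/
def chiS (n : ℕ) (C : Finset (Fin (2*n))) : Gamma n → ℕ :=
  fun q => if q.1.2 ≤ mC n C q.1.1 then 1 else 0

/-- `p(Δ) = Σ_i χ_{S_{C_i}}`. -/
def pMap (n : ℕ) (l : List (Finset (Fin (2*n)))) : Gamma n → ℕ :=
  fun q => (l.map (fun C => chiS n C q)).sum

/-- The monoid `𝓟(Γ)` of order-preserving maps `Γ → ℤ_{≥0}`, as an additive submonoid of
`Γ → ℕ` under pointwise addition. -/
def PGamma (n : ℕ) : AddSubmonoid (Gamma n → ℕ) where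
  carrier := {p | ∀ x y, GammaLE n x y → p x ≤ p y}
  add_mem' := fun ha hb x y h => add_le_add (ha x y h) (hb x y h)
  zero_mem' := fun _ _ _ => Nat.zero_le _



-- ==================== determinant core ====================
section DetCore


open Matrix

variable {k : ℕ}

/-- the column family [W, x, y] -/
def fam (W : Fin k → (Fin (k+2) → ℂ)) (x y : Fin (k+2) → ℂ) : Fin (k+2) → (Fin (k+2) → ℂ) :=
  Fin.snoc (Fin.snoc W x) y

-- index abbreviations
def ik (k : ℕ) : Fin (k+2) := ⟨k, by omega⟩
def il (k : ℕ) : Fin (k+2) := ⟨k+1, by omega⟩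

@[simp] lemma ik_val : ((ik k : Fin (k+2)) : ℕ) = k := rfl
@[simp] lemma il_val : ((il k : Fin (k+2)) : ℕ) = k + 1 := rfl

lemma fam_lt (W : Fin k → (Fin (k+2) → ℂ)) (x y : Fin (k+2) → ℂ) (j : Fin (k+2))
    (h : (j:ℕ) < k) : fam W x y j = W ⟨j, h⟩ := by
  have h1 : fam W x y (((⟨(j:ℕ), h⟩ : Fin k).castSucc).castSucc) = W ⟨j, h⟩ := by
    rw [fam, Fin.snoc_castSucc, Fin.snoc_castSucc]
  have h2 : (((⟨(j:ℕ), h⟩ : Fin k).castSucc).castSucc) = j := Fin.ext (by simp)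
  exact (congrArg (fam W x y) h2).symm.trans h1

lemma fam_k (W : Fin k → (Fin (k+2) → ℂ)) (x y : Fin (k+2) → ℂ) (j : Fin (k+2))
    (h : (j:ℕ) = k) : fam W x y j = x := by
  have h1 : fam W x y ((Fin.last k).castSucc) = x := by
    rw [fam, Fin.snoc_castSucc, Fin.snoc_last]
  have h2 : ((Fin.last k).castSucc : Fin (k+2)) = j := Fin.ext (by simp [h])
  exact (congrArg (fam W x y) h2).symm.trans h1

lemma fam_l (W : Fin k → (Fin (k+2) → ℂ)) (x y : Fin (k+2) → ℂ) (j : Fin (k+2))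
    (h : (j:ℕ) = k+1) : fam W x y j = y := by
  have h1 : fam W x y (Fin.last (k+1)) = y := by rw [fam, Fin.snoc_last]
  have h2 : (Fin.last (k+1) : Fin (k+2)) = j := Fin.ext (by simp [h])
  exact (congrArg (fam W x y) h2).symm.trans h1

lemma fam_ik (W : Fin k → (Fin (k+2) → ℂ)) (x y : Fin (k+2) → ℂ) : fam W x y (ik k) = x :=
  fam_k W x y _ rfl

lemma fam_il (W : Fin k → (Fin (k+2) → ℂ)) (x y : Fin (k+2) → ℂ) : fam W x y (il k) = y :=
  fam_l W x y _ rfl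

/-- `G`: determinant of the matrix with columns [W, x, y]. -/
def Gd (W : Fin k → (Fin (k+2) → ℂ)) (x y : Fin (k+2) → ℂ) : ℂ :=
  Matrix.det (Matrix.of fun r j : Fin (k+2) => fam W x y j r)

/-- `P`: determinant of the matrix with columns [W, x] restricted to the first k+1 rows. -/
def Pd (W : Fin k → (Fin (k+2) → ℂ)) (x : Fin (k+2) → ℂ) : ℂ :=
  Matrix.det (Matrix.of fun r j : Fin (k+1) =>
    (Fin.snoc W x : Fin (k+1) → (Fin (k+2) → ℂ)) j (Fin.castSucc r))

def Phi (k : ℕ) : ((Fin (k+2) → ℂ)) [⋀^(Fin (k+2))]→ₗ[ℂ] ℂ := Matrix.detRowAlternating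

lemma Gd_eq_Phi (W : Fin k → (Fin (k+2) → ℂ)) (x y : Fin (k+2) → ℂ) :
    Gd W x y = Phi k (fam W x y) := by
  have : (Matrix.of fun r j : Fin (k+2) => fam W x y j r) =
      (Matrix.of fun j r : Fin (k+2) => fam W x y j r)ᵀ := rfl
  rw [Gd, this, Matrix.det_transpose]
  rfl

lemma fam_update_x (W : Fin k → (Fin (k+2) → ℂ)) (x x₀ y : Fin (k+2) → ℂ) :
    fam W x y = Function.update (fam W x₀ y) (ik k) x := by
  funext j
  rcases eq_or_ne j (ik k) with rfl | hj
  · rw [Function.update_self, fam_ik]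
  · rw [Function.update_of_ne hj]
    have hjk : (j : ℕ) ≠ k := fun h => hj (Fin.ext (by simpa using h))
    rcases lt_or_ge (j:ℕ) k with h | h
    · rw [fam_lt _ _ _ _ h, fam_lt _ _ _ _ h]
    · have hl : (j:ℕ) = k+1 := by have := j.2; omega
      rw [fam_l _ _ _ _ hl, fam_l _ _ _ _ hl]

lemma fam_update_y (W : Fin k → (Fin (k+2) → ℂ)) (x y y₀ : Fin (k+2) → ℂ) :
    fam W x y = Function.update (fam W x y₀) (il k) y := by
  funext j
  rcases eq_or_ne j (il k) with rfl | hj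
  · rw [Function.update_self, fam_il]
  · rw [Function.update_of_ne hj]
    have hjl : (j : ℕ) ≠ k+1 := fun h => hj (Fin.ext (by simpa using h))
    rcases lt_or_ge (j:ℕ) k with h | h
    · rw [fam_lt _ _ _ _ h, fam_lt _ _ _ _ h]
    · have hl : (j:ℕ) = k := by have := j.2; omega
      rw [fam_k _ _ _ _ hl, fam_k _ _ _ _ hl]

/-- G is linear in x; as a linear map. -/
def GlinX (W : Fin k → (Fin (k+2) → ℂ)) (y : Fin (k+2) → ℂ) : (Fin (k+2) → ℂ) →ₗ[ℂ] ℂ where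
  toFun x := Gd W x y
  map_add' a b := by
    show Gd W (a+b) y = Gd W a y + Gd W b y
    rw [Gd_eq_Phi, Gd_eq_Phi, Gd_eq_Phi, fam_update_x W (a+b) 0 y, fam_update_x W a 0 y,
      fam_update_x W b 0 y]
    exact (Phi k).toMultilinearMap.map_update_add _ _ a b
  map_smul' r a := by
    show Gd W (r • a) y = r • Gd W a y
    rw [Gd_eq_Phi, Gd_eq_Phi, fam_update_x W (r • a) 0 y, fam_update_x W a 0 y]
    exact (Phi k).toMultilinearMap.map_update_smul _ _ r a

def GlinY (W : Fin k → (Fin (k+2) → ℂ)) (x : Fin (k+2) → ℂ) : (Fin (k+2) → ℂ) →ₗ[ℂ] ℂ where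
  toFun y := Gd W x y
  map_add' a b := by
    show Gd W x (a+b) = Gd W x a + Gd W x b
    rw [Gd_eq_Phi, Gd_eq_Phi, Gd_eq_Phi, fam_update_y W x (a+b) 0, fam_update_y W x a 0,
      fam_update_y W x b 0]
    exact (Phi k).toMultilinearMap.map_update_add _ _ a b
  map_smul' r a := by
    show Gd W x (r • a) = r • Gd W x a
    rw [Gd_eq_Phi, Gd_eq_Phi, fam_update_y W x (r • a) 0, fam_update_y W x a 0]
    exact (Phi k).toMultilinearMap.map_update_smul _ _ r a

lemma Gd_swap (W : Fin k → (Fin (k+2) → ℂ)) (x y : Fin (k+2) → ℂ) :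
    Gd W x y = - Gd W y x := by
  rw [Gd_eq_Phi, Gd_eq_Phi]
  have hne : ik k ≠ il k := by
    intro h; have := congrArg Fin.val h; simp at this
  have hfe : fam W x y = fam W y x ∘ (Equiv.swap (ik k) (il k)) := by
    funext j
    rcases eq_or_ne j (ik k) with rfl | hj
    · simp only [Function.comp_apply, Equiv.swap_apply_left, fam_ik, fam_il]
    rcases eq_or_ne j (il k) with rfl | hj'
    · simp only [Function.comp_apply, Equiv.swap_apply_right, fam_ik, fam_il]
    · have hlt : (j:ℕ) < k := by
        have := j.2
        have h1 : (j:ℕ) ≠ k := fun h => hj (Fin.ext (by simpa using h))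
        have h2 : (j:ℕ) ≠ k+1 := fun h => hj' (Fin.ext (by simpa using h))
        omega
      simp only [Function.comp_apply, Equiv.swap_apply_of_ne_of_ne hj hj']
      rw [fam_lt _ _ _ _ hlt, fam_lt _ _ _ _ hlt]
  rw [hfe]
  exact (Phi k).map_swap _ hne

lemma Gd_eq_zero_of_W (W : Fin k → (Fin (k+2) → ℂ)) (t : Fin k) (y : Fin (k+2) → ℂ) :
    Gd W (W t) y = 0 := by
  rw [Gd_eq_Phi]
  refine (Phi k).map_eq_zero_of_eq _
    (i := ⟨(t:ℕ), lt_of_lt_of_le t.2 (by omega)⟩) (j := ik k) ?_ ?_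
  · rw [fam_lt _ _ _ _ (by simpa using t.2), fam_ik]
  · intro h
    have h2 := congrArg Fin.val h
    simp at h2
    have := t.2
    omega

lemma Gd_eq_zero_of_W' (W : Fin k → (Fin (k+2) → ℂ)) (t : Fin k) (x : Fin (k+2) → ℂ) :
    Gd W x (W t) = 0 := by
  rw [Gd_swap, Gd_eq_zero_of_W, neg_zero]

lemma Gd_self (W : Fin k → (Fin (k+2) → ℂ)) (x : Fin (k+2) → ℂ) : Gd W x x = 0 := by
  rw [Gd_eq_Phi]
  refine (Phi k).map_eq_zero_of_eq _ (i := ik k) (j := il k) ?_ ?_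
  · rw [fam_ik, fam_il]
  · intro h; have := congrArg Fin.val h; simp at this

/-- The three-term Plücker relation. -/
theorem plucker_core (W : Fin k → (Fin (k+2) → ℂ)) (u a b c : Fin (k+2) → ℂ) :
    Gd W u a * Gd W b c - Gd W u b * Gd W a c + Gd W u c * Gd W a b = 0 := by
  by_cases hW : LinearIndependent ℂ W
  case neg =>
    have hz : ∀ x y : Fin (k+2) → ℂ, Gd W x y = 0 := by
      intro x y
      rw [Gd_eq_Phi]
      refine (Phi k).map_linearDependent _ (fun hind => hW ?_)
      have hWe : W = fam W x y ∘
          (fun t : Fin k => (⟨(t:ℕ), lt_of_lt_of_le t.2 (by omega)⟩ : Fin (k+2))) := by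
        funext t
        simp only [Function.comp_apply]
        rw [fam_lt _ _ _ _ (by simpa using t.2)]
      rw [hWe]
      refine hind.comp _ (fun s t h => ?_)
      have := congrArg Fin.val h
      exact Fin.ext (by simpa using this)
    simp [hz]
  case pos =>
    have hfr : Module.finrank ℂ (Fin (k+2) → ℂ) = k + 2 := by
      rw [Module.finrank_pi]; simp
    obtain ⟨f, hf⟩ := exists_linearIndependent_snoc_of_lt_finrank hW (by omega)
    obtain ⟨g, hg⟩ := exists_linearIndependent_snoc_of_lt_finrank hf (by omega)
    have hfam : LinearIndependent ℂ (fam W f g) := hg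
    let B : Module.Basis (Fin (k+2)) ℂ (Fin (k+2) → ℂ) :=
      basisOfLinearIndependentOfCardEqFinrank hfam (by simp [hfr])
    have hB : ⇑B = fam W f g := coe_basisOfLinearIndependentOfCardEqFinrank _ _
    have hBmid : B ((Fin.last k).castSucc) = f := by
      rw [hB]; exact fam_k _ _ _ _ (by simp)
    have hBlast : B (Fin.last (k+1)) = g := by
      rw [hB]; exact fam_l _ _ _ _ (by simp)
    have hmid : ((Fin.last k).castSucc : Fin (k+2)) = ik k := Fin.ext (by simp)
    have hlast : (Fin.last (k+1) : Fin (k+2)) = il k := Fin.ext (by simp)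
    have hBW : ∀ t : Fin k, B (t.castSucc.castSucc) = W t := by
      intro t
      rw [hB, fam_lt _ _ _ _ (by simpa using t.2)]
      exact congrArg W (Fin.ext (by simp))
    -- expansion of Gd in the first argument
    have expandX : ∀ x y : Fin (k+2) → ℂ, Gd W x y =
        B.repr x (ik k) * Gd W f y + B.repr x (il k) * Gd W g y := by
      intro x y
      have h1 : Gd W x y = GlinX W y (∑ j, B.repr x j • B j) := by
        rw [B.sum_repr x]; rfl
      rw [h1, map_sum]
      have h2 : ∀ j, GlinX W y (B.repr x j • B j) = B.repr x j • Gd W (B j) y := fun j => by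
        rw [LinearMap.map_smul]; rfl
      simp only [h2]
      rw [Fin.sum_univ_castSucc, Fin.sum_univ_castSucc]
      rw [Finset.sum_eq_zero (fun t _ => by rw [hBW t, Gd_eq_zero_of_W, smul_zero]), zero_add]
      rw [hBmid, hBlast, hmid, hlast, smul_eq_mul, smul_eq_mul]
    have expandY : ∀ x y : Fin (k+2) → ℂ, Gd W x y =
        B.repr y (ik k) * Gd W x f + B.repr y (il k) * Gd W x g := by
      intro x y
      have h1 : Gd W x y = GlinY W x (∑ j, B.repr y j • B j) := by
        rw [B.sum_repr y]; rfl
      rw [h1, map_sum]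
      have h2 : ∀ j, GlinY W x (B.repr y j • B j) = B.repr y j • Gd W x (B j) := fun j => by
        rw [LinearMap.map_smul]; rfl
      simp only [h2]
      rw [Fin.sum_univ_castSucc, Fin.sum_univ_castSucc]
      rw [Finset.sum_eq_zero (fun t _ => by rw [hBW t, Gd_eq_zero_of_W', smul_zero]), zero_add]
      rw [hBmid, hBlast, hmid, hlast, smul_eq_mul, smul_eq_mul]
    set D := Gd W f g with hD
    have hgf : Gd W g f = -D := by rw [hD, Gd_swap]
    have key : ∀ x y : Fin (k+2) → ℂ, Gd W x y =
        (B.repr x (ik k) * B.repr y (il k) - B.repr x (il k) * B.repr y (ik k)) * D := by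
      intro x y
      rw [expandX x y, expandY f y, expandY g y, Gd_self, Gd_self, hgf]
      ring
    rw [key u a, key b c, key u b, key a c, key u c, key a b]
    ring

/-- helper: fam at castSucc j equals snoc W x j -/
lemma fam_lt' {W : Fin k → (Fin (k+2) → ℂ)} {x y : Fin (k+2) → ℂ} {j : Fin (k+1)}
    {r : Fin (k+2)} : fam W x y (j.castSucc) r
      = (Fin.snoc W x : Fin (k+1) → (Fin (k+2) → ℂ)) j r := by
  rw [fam, Fin.snoc_castSucc]

/-- expansion along a last column equal to the last standard basis vector -/
lemma det_last_col {m : ℕ} (M : Matrix (Fin (m+1)) (Fin (m+1)) ℂ)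
    (h : ∀ r, M r (Fin.last m) = if r = Fin.last m then 1 else 0) :
    M.det = (M.submatrix Fin.castSucc Fin.castSucc).det := by
  rw [Matrix.det_succ_column M (Fin.last m)]
  rw [Finset.sum_eq_single (Fin.last m)]
  · rw [h, if_pos rfl, Fin.succAbove_last]
    simp [Fin.val_last, pow_add, mul_comm]
    rw [← pow_add]
    simp [Nat.even_add]
  · intro r _ hr
    rw [h, if_neg hr, mul_zero, zero_mul]
  · intro hmem; exact absurd (Finset.mem_univ _) hmem

/-- the last standard basis vector -/
def eL (k : ℕ) : Fin (k+2) → ℂ := fun r => if (r:ℕ) = k+1 then 1 else 0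

lemma Pd_eq_Gd (W : Fin k → (Fin (k+2) → ℂ)) (x : Fin (k+2) → ℂ) :
    Pd W x = Gd W x (eL k) := by
  rw [Gd]
  rw [det_last_col]
  · rw [Pd]
    congr 1
    ext r j
    simp only [Matrix.submatrix_apply, Matrix.of_apply]
    rw [fam_lt']
  · intro r
    simp only [Matrix.of_apply]
    rw [fam_l _ _ _ _ (by simp)]
    simp [eL, Fin.ext_iff]


theorem plucker_main (W : Fin k → (Fin (k+2) → ℂ)) (a b c : Fin (k+2) → ℂ) :
    Pd W a * Gd W b c - Pd W b * Gd W a c + Pd W c * Gd W a b = 0 := by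
  have h := plucker_core W (eL k) a b c
  have hswap : ∀ x, Gd W (eL k) x = - Pd W x := by
    intro x; rw [Pd_eq_Gd, Gd_swap]
  rw [hswap a, hswap b, hswap c] at h
  linear_combination -h


end DetCore

-- ==================== enumeration layer ====================
section Enum

@[simp] lemma val_mk' {n a : ℕ} (h : a < n) : ((⟨a, h⟩ : Fin n) : ℕ) = a := rfl

variable {N : ℕ}

lemma card_eq_of_enum {m : ℕ} (C : Finset (Fin N)) (e : Fin m → Fin N)
    (he : ∀ x, x ∈ C ↔ ∃ j, e j = x) (hinj : Function.Injective e) : C.card = m := by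
  have hC : C = Finset.image e Finset.univ := by
    ext x
    simp only [Finset.mem_image, Finset.mem_univ, true_and]
    exact he x
  rw [hC, Finset.card_image_of_injective _ hinj, Finset.card_univ, Fintype.card_fin]

/-- the minor of `X` on rows 1..m and columns given by an explicit enumeration. -/
theorem deltaFn_eq {n m : ℕ} (C : Finset (Fin (2*n))) (h : C.card = m) (h2 : m ≤ 2*n)
    (e : Fin m → Fin (2*n)) (he : ∀ x, e x ∈ C) (hmono : StrictMono e)
    (X : Matrix (Fin (2*n)) (Fin (2*n)) ℂ) :
    deltaFn n C X = Matrix.det (Matrix.of fun r j : Fin m => X (Fin.castLE h2 r) (e j)) := by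
  subst h
  unfold deltaFn
  congr 1
  ext r j
  have hu := Finset.orderEmbOfFin_unique (s := C) rfl he hmono
  simp only [Matrix.of_apply]
  rw [Finset.coe_orderIsoOfFin_apply, ← hu]

-- enumeration of Iset
def eI (n m : ℕ) (hm : m ≤ 2*n) : Fin m → Fin (2*n) :=
  fun j => ⟨(j:ℕ), lt_of_lt_of_le j.2 hm⟩

@[simp] lemma eI_val (n m : ℕ) (hm : m ≤ 2*n) (j : Fin m) : ((eI n m hm j) : ℕ) = (j:ℕ) := rfl

lemma eI_mem_iff (n m : ℕ) (hm : m ≤ 2*n) (x : Fin (2*n)) :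
    x ∈ Iset n m ↔ ∃ j, eI n m hm j = x := by
  simp only [Iset, Finset.mem_filter, Finset.mem_univ, true_and]
  constructor
  · intro h
    exact ⟨⟨(x:ℕ), by omega⟩, Fin.ext rfl⟩
  · rintro ⟨j, rfl⟩
    have := j.2
    rw [eI_val]
    omega
lemma eI_mono (n m : ℕ) (hm : m ≤ 2*n) : StrictMono (eI n m hm) := by
  intro s t h
  rw [Fin.lt_def, eI_val, eI_val]
  exact h

lemma card_Iset (n m : ℕ) (hm : m ≤ 2*n) : (Iset n m).card = m :=
  card_eq_of_enum _ _ (eI_mem_iff n m hm) (eI_mono n m hm).injective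

lemma eI_mem (n m : ℕ) (hm : m ≤ 2*n) (j : Fin m) : eI n m hm j ∈ Iset n m :=
  (eI_mem_iff n m hm _).2 ⟨j, rfl⟩

-- enumeration of Jset n t and JPset n t, cardinality t+1
def eJ (n t : ℕ) (h1 : t ≤ n - 1) (h2 : 2 ≤ n) : Fin (t+1) → Fin (2*n) :=
  fun j => if (j:ℕ) < t then ⟨(j:ℕ), by have := j.2; omega⟩ else ⟨n-1, by omega⟩

lemma eJ_val (n t : ℕ) (h1 : t ≤ n - 1) (h2 : 2 ≤ n) (j : Fin (t+1)) :
    ((eJ n t h1 h2 j) : ℕ) = if (j:ℕ) < t then (j:ℕ) else n-1 := by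
  rw [eJ]; split <;> rfl

lemma eJ_mem_iff (n t : ℕ) (h1 : t ≤ n - 1) (h2 : 2 ≤ n) (x : Fin (2*n)) :
    x ∈ Jset n t ↔ ∃ j, eJ n t h1 h2 j = x := by
  simp only [Jset, Finset.mem_filter, Finset.mem_univ, true_and]
  constructor
  · rintro (h | h)
    · refine ⟨⟨(x:ℕ), by omega⟩, Fin.ext ?_⟩
      rw [eJ_val, val_mk', if_pos (by omega)]
    · refine ⟨⟨t, by omega⟩, Fin.ext ?_⟩
      rw [eJ_val, val_mk', if_neg (by omega)]
      omega
  · rintro ⟨j, rfl⟩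
    rw [eJ_val]
    have := j.2
    split
    · left; omega
    · right; omega

lemma eJ_mono (n t : ℕ) (h1 : t ≤ n - 1) (h2 : 2 ≤ n) : StrictMono (eJ n t h1 h2) := by
  intro s u h
  rw [Fin.lt_def] at h
  rw [Fin.lt_def, eJ_val, eJ_val]
  have hs2 := s.2
  have hu2 := u.2
  split <;> split <;> omega

lemma card_Jset (n t : ℕ) (h1 : t ≤ n - 1) (h2 : 2 ≤ n) : (Jset n t).card = t + 1 :=
  card_eq_of_enum _ _ (eJ_mem_iff n t h1 h2) (eJ_mono n t h1 h2).injective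

lemma eJ_mem (n t : ℕ) (h1 : t ≤ n - 1) (h2 : 2 ≤ n) (j : Fin (t+1)) :
    eJ n t h1 h2 j ∈ Jset n t := (eJ_mem_iff n t h1 h2 _).2 ⟨j, rfl⟩

def eJP (n t : ℕ) (h1 : t ≤ n - 1) (h2 : 2 ≤ n) : Fin (t+1) → Fin (2*n) :=
  fun j => if (j:ℕ) < t then ⟨(j:ℕ), by have := j.2; omega⟩ else ⟨n, by omega⟩

lemma eJP_val (n t : ℕ) (h1 : t ≤ n - 1) (h2 : 2 ≤ n) (j : Fin (t+1)) :
    ((eJP n t h1 h2 j) : ℕ) = if (j:ℕ) < t then (j:ℕ) else n := by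
  rw [eJP]; split <;> rfl

lemma eJP_mem_iff (n t : ℕ) (h1 : t ≤ n - 1) (h2 : 2 ≤ n) (x : Fin (2*n)) :
    x ∈ JPset n t ↔ ∃ j, eJP n t h1 h2 j = x := by
  simp only [JPset, Finset.mem_filter, Finset.mem_univ, true_and]
  constructor
  · rintro (h | h)
    · refine ⟨⟨(x:ℕ), by omega⟩, Fin.ext ?_⟩
      rw [eJP_val, val_mk', if_pos (by omega)]
    · refine ⟨⟨t, by omega⟩, Fin.ext ?_⟩
      rw [eJP_val, val_mk', if_neg (by omega)]
      omega
  · rintro ⟨j, rfl⟩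
    rw [eJP_val]
    have := j.2
    split
    · left; omega
    · right; omega

lemma eJP_mono (n t : ℕ) (h1 : t ≤ n - 1) (h2 : 2 ≤ n) : StrictMono (eJP n t h1 h2) := by
  intro s u h
  rw [Fin.lt_def] at h
  rw [Fin.lt_def, eJP_val, eJP_val]
  have hs2 := s.2
  have hu2 := u.2
  split <;> split <;> omega

lemma card_JPset (n t : ℕ) (h1 : t ≤ n - 1) (h2 : 2 ≤ n) : (JPset n t).card = t + 1 :=
  card_eq_of_enum _ _ (eJP_mem_iff n t h1 h2) (eJP_mono n t h1 h2).injective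

lemma eJP_mem (n t : ℕ) (h1 : t ≤ n - 1) (h2 : 2 ≤ n) (j : Fin (t+1)) :
    eJP n t h1 h2 j ∈ JPset n t := (eJP_mem_iff n t h1 h2 _).2 ⟨j, rfl⟩

def eK (n t : ℕ) (h1 : t ≤ n - 2) (h2 : 2 ≤ n) : Fin (t+2) → Fin (2*n) :=
  fun j => if (j:ℕ) < t then ⟨(j:ℕ), by have := j.2; omega⟩
    else if (j:ℕ) = t then ⟨n-1, by omega⟩ else ⟨n, by omega⟩

lemma eK_val (n t : ℕ) (h1 : t ≤ n - 2) (h2 : 2 ≤ n) (j : Fin (t+2)) :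
    ((eK n t h1 h2 j) : ℕ) = if (j:ℕ) < t then (j:ℕ) else if (j:ℕ) = t then n-1 else n := by
  rw [eK]; split
  · rfl
  · split <;> rfl

lemma eK_mem_iff (n t : ℕ) (h1 : t ≤ n - 2) (h2 : 2 ≤ n) (x : Fin (2*n)) :
    x ∈ Kset n t ↔ ∃ j, eK n t h1 h2 j = x := by
  simp only [Kset, Finset.mem_filter, Finset.mem_univ, true_and]
  constructor
  · rintro (h | h | h)
    · refine ⟨⟨(x:ℕ), by omega⟩, Fin.ext ?_⟩
      rw [eK_val, val_mk', if_pos (by omega)]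
    · refine ⟨⟨t, by omega⟩, Fin.ext ?_⟩
      rw [eK_val, val_mk', if_neg (by omega), if_pos rfl]
      omega
    · refine ⟨⟨t+1, by omega⟩, Fin.ext ?_⟩
      rw [eK_val, val_mk', if_neg (by omega), if_neg (by omega)]
      omega
  · rintro ⟨j, rfl⟩
    rw [eK_val]
    have := j.2
    split
    · left; omega
    · split
      · right; left; omega
      · right; right; omega

lemma eK_mono (n t : ℕ) (h1 : t ≤ n - 2) (h2 : 2 ≤ n) : StrictMono (eK n t h1 h2) := by
  intro s u h
  rw [Fin.lt_def] at h
  rw [Fin.lt_def, eK_val, eK_val]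
  have hs2 := s.2
  have hu2 := u.2
  split <;> split <;> (try split) <;> (try split) <;> omega

lemma card_Kset (n t : ℕ) (h1 : t ≤ n - 2) (h2 : 2 ≤ n) : (Kset n t).card = t + 2 :=
  card_eq_of_enum _ _ (eK_mem_iff n t h1 h2) (eK_mono n t h1 h2).injective

lemma eK_mem (n t : ℕ) (h1 : t ≤ n - 2) (h2 : 2 ≤ n) (j : Fin (t+2)) :
    eK n t h1 h2 j ∈ Kset n t := (eK_mem_iff n t h1 h2 _).2 ⟨j, rfl⟩

end Enum

-- ==================== Plücker for deltaFn ====================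
section PluckerDelta

lemma snoc_lt {α : Type*} {m : ℕ} (g : Fin m → α) (x : α) (j : Fin (m+1)) (h : (j:ℕ) < m) :
    (Fin.snoc g x : Fin (m+1) → α) j = g ⟨j, h⟩ := by
  have h1 : (Fin.snoc g x : Fin (m+1) → α) ((⟨(j:ℕ), h⟩ : Fin m).castSucc) = g ⟨j, h⟩ :=
    Fin.snoc_castSucc _ _ _
  have hh : ((⟨(j:ℕ), h⟩ : Fin m).castSucc) = j := Fin.ext (by simp)
  exact (congrArg _ hh).symm.trans h1

lemma snoc_last' {α : Type*} {m : ℕ} (g : Fin m → α) (x : α) (j : Fin (m+1)) (h : (j:ℕ) = m) :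
    (Fin.snoc g x : Fin (m+1) → α) j = x := by
  have hh : (Fin.last m : Fin (m+1)) = j := Fin.ext (by simp [h])
  exact (congrArg _ hh).symm.trans (Fin.snoc_last _ _)

theorem plucker_delta (n k : ℕ) (h2 : 2 ≤ n) (hk : k + 1 ≤ n - 1)
    (X : Matrix (Fin (2*n)) (Fin (2*n)) ℂ) :
    deltaFn n (Iset n (k+1)) X * deltaFn n (Kset n k) X
    = deltaFn n (Jset n k) X * deltaFn n (JPset n (k+1)) X
      - deltaFn n (JPset n k) X * deltaFn n (Jset n (k+1)) X := by
  have hkn : k + 2 ≤ 2*n := by omega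
  have hk1 : k + 1 ≤ 2*n := by omega
  set vcol : Fin (2*n) → (Fin (k+2) → ℂ) := fun c r => X (Fin.castLE hkn r) c with hvcol
  set W : Fin k → (Fin (k+2) → ℂ) := fun t => vcol ⟨(t:ℕ), by have := t.2; omega⟩ with hW
  set va : Fin (k+2) → ℂ := vcol ⟨k, by omega⟩ with hva
  set vb : Fin (k+2) → ℂ := vcol ⟨n-1, by omega⟩ with hvb
  set vc : Fin (k+2) → ℂ := vcol ⟨n, by omega⟩ with hvc
  have hX : ∀ (r1 r2 c1 c2 : Fin (2*n)), r1 = r2 → c1 = c2 → X r1 c1 = X r2 c2 := by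
    rintro _ _ _ _ rfl rfl; rfl
  -- the three size-(k+1) minors
  have hI : deltaFn n (Iset n (k+1)) X = Pd W va := by
    rw [deltaFn_eq _ (card_Iset n (k+1) hk1) hk1 _ (eI_mem n (k+1) hk1) (eI_mono n (k+1) hk1) X,
      Pd]
    congr 1
    ext r j
    simp only [Matrix.of_apply]
    rcases lt_or_ge (j:ℕ) k with h | h
    · rw [snoc_lt _ _ _ h, hW]
      exact hX _ _ _ _ (Fin.ext rfl) (Fin.ext rfl)
    · have h' : (j:ℕ) = k := by have := j.2; omega
      rw [snoc_last' _ _ _ h', hva]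
      exact hX _ _ _ _ (Fin.ext rfl) (Fin.ext (by rw [eI_val]; exact h'))
  have hJ : deltaFn n (Jset n k) X = Pd W vb := by
    rw [deltaFn_eq _ (card_Jset n k (by omega) h2) (by omega) _ (eJ_mem n k (by omega) h2)
      (eJ_mono n k (by omega) h2) X, Pd]
    congr 1
    ext r j
    simp only [Matrix.of_apply]
    rcases lt_or_ge (j:ℕ) k with h | h
    · rw [snoc_lt _ _ _ h, hW]
      exact hX _ _ _ _ (Fin.ext rfl) (Fin.ext (by rw [eJ_val, if_pos h, val_mk']))
    · have h' : (j:ℕ) = k := by have := j.2; omega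
      rw [snoc_last' _ _ _ h', hvb]
      exact hX _ _ _ _ (Fin.ext rfl) (Fin.ext (by rw [eJ_val, if_neg (by omega), val_mk']))
  have hJP : deltaFn n (JPset n k) X = Pd W vc := by
    rw [deltaFn_eq _ (card_JPset n k (by omega) h2) (by omega) _ (eJP_mem n k (by omega) h2)
      (eJP_mono n k (by omega) h2) X, Pd]
    congr 1
    ext r j
    simp only [Matrix.of_apply]
    rcases lt_or_ge (j:ℕ) k with h | h
    · rw [snoc_lt _ _ _ h, hW]
      exact hX _ _ _ _ (Fin.ext rfl) (Fin.ext (by rw [eJP_val, if_pos h, val_mk']))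
    · have h' : (j:ℕ) = k := by have := j.2; omega
      rw [snoc_last' _ _ _ h', hvc]
      exact hX _ _ _ _ (Fin.ext rfl) (Fin.ext (by rw [eJP_val, if_neg (by omega), val_mk']))
  -- the three size-(k+2) minors
  have hfam3 : ∀ (x y : Fin (k+2) → ℂ) (j : Fin (k+2)) (r : Fin (k+2)),
      True := fun _ _ _ _ => trivial
  have hK : deltaFn n (Kset n k) X = Gd W vb vc := by
    rw [deltaFn_eq _ (card_Kset n k (by omega) h2) hkn _ (eK_mem n k (by omega) h2)
      (eK_mono n k (by omega) h2) X, Gd]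
    congr 1
    ext r j
    simp only [Matrix.of_apply]
    rcases lt_or_ge (j:ℕ) k with h | h
    · rw [fam_lt _ _ _ _ h, hW]
      exact hX _ _ _ _ (Fin.ext rfl) (Fin.ext (by rw [eK_val, if_pos h, val_mk']))
    · rcases eq_or_lt_of_le h with h' | h'
      · rw [fam_k _ _ _ _ h'.symm, hvb]
        exact hX _ _ _ _ (Fin.ext rfl)
          (Fin.ext (by rw [eK_val, if_neg (by omega), if_pos h'.symm, val_mk']))
      · have h'' : (j:ℕ) = k+1 := by have := j.2; omega
        rw [fam_l _ _ _ _ h'', hvc]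
        exact hX _ _ _ _ (Fin.ext rfl)
          (Fin.ext (by rw [eK_val, if_neg (by omega), if_neg (by omega), val_mk']))
  have hJ1 : deltaFn n (Jset n (k+1)) X = Gd W va vb := by
    rw [deltaFn_eq _ (card_Jset n (k+1) hk h2) hkn _ (eJ_mem n (k+1) hk h2)
      (eJ_mono n (k+1) hk h2) X, Gd]
    congr 1
    ext r j
    simp only [Matrix.of_apply]
    rcases lt_or_ge (j:ℕ) k with h | h
    · rw [fam_lt _ _ _ _ h, hW]
      exact hX _ _ _ _ (Fin.ext rfl) (Fin.ext (by rw [eJ_val, if_pos (by omega), val_mk']))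
    · rcases eq_or_lt_of_le h with h' | h'
      · rw [fam_k _ _ _ _ h'.symm, hva]
        exact hX _ _ _ _ (Fin.ext rfl)
          (Fin.ext (by rw [eJ_val, if_pos (by omega)]; simp; omega))
      · have h'' : (j:ℕ) = k+1 := by have := j.2; omega
        rw [fam_l _ _ _ _ h'', hvb]
        exact hX _ _ _ _ (Fin.ext rfl)
          (Fin.ext (by rw [eJ_val, if_neg (by omega), val_mk']))
  have hJP1 : deltaFn n (JPset n (k+1)) X = Gd W va vc := by
    rw [deltaFn_eq _ (card_JPset n (k+1) hk h2) hkn _ (eJP_mem n (k+1) hk h2)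
      (eJP_mono n (k+1) hk h2) X, Gd]
    congr 1
    ext r j
    simp only [Matrix.of_apply]
    rcases lt_or_ge (j:ℕ) k with h | h
    · rw [fam_lt _ _ _ _ h, hW]
      exact hX _ _ _ _ (Fin.ext rfl) (Fin.ext (by rw [eJP_val, if_pos (by omega), val_mk']))
    · rcases eq_or_lt_of_le h with h' | h'
      · rw [fam_k _ _ _ _ h'.symm, hva]
        exact hX _ _ _ _ (Fin.ext rfl)
          (Fin.ext (by rw [eJP_val, if_pos (by omega)]; simp; omega))
      · have h'' : (j:ℕ) = k+1 := by have := j.2; omega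
        rw [fam_l _ _ _ _ h'', hvc]
        exact hX _ _ _ _ (Fin.ext rfl)
          (Fin.ext (by rw [eJP_val, if_neg (by omega), val_mk']))
  have H := plucker_main W va vb vc
  rw [hI, hJ, hJP, hK, hJ1, hJP1]
  linear_combination H

end PluckerDelta

-- ==================== poset layer ====================
section Poset

/-- the element of `𝓛` of rank `r` -/
def elt (n r : ℕ) : Finset (Fin (2*n)) :=
  if r % 4 = 0 then Jset n (n-1-r/4)
  else if r % 4 = 1 then JPset n (n-1-r/4)
  else if r % 4 = 2 then Iset n (n-1-r/4)
  else Kset n (n-2-r/4)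

lemma elt_eval0 {n r : ℕ} (h : r % 4 = 0) : elt n r = Jset n (n-1-r/4) := by
  unfold elt; rw [if_pos h]

lemma elt_eval1 {n r : ℕ} (h : r % 4 = 1) : elt n r = JPset n (n-1-r/4) := by
  unfold elt; rw [if_neg (by omega), if_pos h]

lemma elt_eval2 {n r : ℕ} (h : r % 4 = 2) : elt n r = Iset n (n-1-r/4) := by
  unfold elt; rw [if_neg (by omega), if_neg (by omega), if_pos h]

lemma elt_eval3 {n r : ℕ} (h : r % 4 = 3) : elt n r = Kset n (n-2-r/4) := by
  unfold elt; rw [if_neg (by omega), if_neg (by omega), if_neg (by omega)]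

-- single poset steps
lemma lle_step0 {n : ℕ} (hn : 2 ≤ n) (j : ℕ) (hj : j ≤ n-1) :
    LLE n (Jset n j) (JPset n j) := by
  rcases Nat.eq_zero_or_pos j with rfl | hj1
  · exact Relation.ReflTransGen.single ⟨1, le_refl 1, by omega,
      Or.inr (Or.inr (Or.inr (Or.inr (Or.inr ⟨rfl, rfl⟩))))⟩
  · exact Relation.ReflTransGen.single ⟨j, hj1, hj, Or.inl ⟨rfl, rfl⟩⟩

lemma lle_stepJPI {n : ℕ} (j : ℕ) (h1 : 1 ≤ j) (h2 : j ≤ n-1) :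
    LLE n (JPset n j) (Iset n j) :=
  Relation.ReflTransGen.single ⟨j, h1, h2, Or.inr (Or.inl ⟨rfl, rfl⟩)⟩

lemma lle_stepJPK {n : ℕ} (j : ℕ) (h1 : 1 ≤ j) (h2 : j ≤ n-1) :
    LLE n (JPset n j) (Kset n (j-1)) :=
  Relation.ReflTransGen.single ⟨j, h1, h2, Or.inr (Or.inr (Or.inl ⟨rfl, rfl⟩))⟩

lemma lle_stepIJ {n : ℕ} (j : ℕ) (h1 : 1 ≤ j) (h2 : j ≤ n-1) :
    LLE n (Iset n j) (Jset n (j-1)) :=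
  Relation.ReflTransGen.single ⟨j, h1, h2, Or.inr (Or.inr (Or.inr (Or.inl ⟨rfl, rfl⟩)))⟩

lemma lle_stepKJ {n : ℕ} (j : ℕ) (h1 : 1 ≤ j) (h2 : j ≤ n-1) :
    LLE n (Kset n (j-1)) (Jset n (j-1)) :=
  Relation.ReflTransGen.single ⟨j, h1, h2, Or.inr (Or.inr (Or.inr (Or.inr (Or.inl ⟨rfl, rfl⟩))))⟩

lemma chainElt {n : ℕ} (hn : 2 ≤ n) :
    ∀ d r, r + d ≤ 4*n-3 → ¬(r % 4 = 2 ∧ d = 1) → LLE n (elt n r) (elt n (r+d)) := by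
  intro d
  induction d using Nat.strong_induction_on with
  | _ d ih =>
    intro r hr hbad
    rcases Nat.eq_zero_or_pos d with rfl | hd
    · exact Relation.ReflTransGen.refl
    have h4 : r % 4 = 0 ∨ r % 4 = 1 ∨ r % 4 = 2 ∨ r % 4 = 3 := by omega
    rcases h4 with h4 | h4 | h4 | h4
    · -- J_j step to JP_j
      have step : LLE n (elt n r) (elt n (r+1)) := by
        rw [elt_eval0 h4, elt_eval1 (by omega : (r+1) % 4 = 1),
          (by omega : (r+1)/4 = r/4)]
        exact lle_step0 hn _ (by omega)
      have rest := ih (d-1) (by omega) (r+1) (by omega) (by omega)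
      rw [show r+1+(d-1) = r+d by omega] at rest
      exact step.trans rest
    · rcases eq_or_ne d 1 with rfl | hd1
      · rw [elt_eval1 h4, elt_eval2 (by omega : (r+1) % 4 = 2),
          (by omega : (r+1)/4 = r/4)]
        exact lle_stepJPI _ (by omega) (by omega)
      rcases eq_or_ne d 2 with rfl | hd2
      · rw [elt_eval1 h4, elt_eval3 (by omega : (r+2) % 4 = 3),
          (by omega : (r+2)/4 = r/4)]
        have := lle_stepJPK (n := n) (n-1-r/4) (by omega) (by omega)
        rwa [show n-1-r/4-1 = n-2-r/4 by omega] at this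
      · have step : LLE n (elt n r) (elt n (r+1)) := by
          rw [elt_eval1 h4, elt_eval2 (by omega : (r+1) % 4 = 2),
            (by omega : (r+1)/4 = r/4)]
          exact lle_stepJPI _ (by omega) (by omega)
        have rest := ih (d-1) (by omega) (r+1) (by omega) (by omega)
        rw [show r+1+(d-1) = r+d by omega] at rest
        exact step.trans rest
    · -- I_j , must jump two
      have hd2 : 2 ≤ d := by omega
      have step : LLE n (elt n r) (elt n (r+2)) := by
        rw [elt_eval2 h4, elt_eval0 (by omega : (r+2) % 4 = 0),
          (by omega : (r+2)/4 = r/4 + 1)]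
        have := lle_stepIJ (n := n) (n-1-r/4) (by omega) (by omega)
        rwa [show n-1-r/4-1 = n-1-(r/4+1) by omega] at this
      have rest := ih (d-2) (by omega) (r+2) (by omega) (by omega)
      rw [show r+2+(d-2) = r+d by omega] at rest
      exact step.trans rest
    · have step : LLE n (elt n r) (elt n (r+1)) := by
        rw [elt_eval3 h4, elt_eval0 (by omega : (r+1) % 4 = 0),
          (by omega : (r+1)/4 = r/4 + 1)]
        rw [show n-1-(r/4+1) = n-2-r/4 by omega]
        have := lle_stepKJ (n := n) (n-1-r/4) (by omega) (by omega)
        rwa [show n-1-r/4-1 = n-2-r/4 by omega] at this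
      have rest := ih (d-1) (by omega) (r+1) (by omega) (by omega)
      rw [show r+1+(d-1) = r+d by omega] at rest
      exact step.trans rest

lemma mem_LSet_rank {n : ℕ} (hn : 2 ≤ n) {x : Finset (Fin (2*n))} (hx : x ∈ LSet n) :
    ∃ r, r ≤ 4*n-3 ∧ x = elt n r := by
  rcases hx with ⟨i,h1,h2,rfl⟩ | ⟨j,h,rfl⟩ | ⟨j,h,rfl⟩ | ⟨m,h,rfl⟩
  · refine ⟨4*(n-1-i)+2, by omega, ?_⟩
    rw [elt_eval2 (by omega)]
    exact congrArg _ (by omega)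
  · refine ⟨4*(n-1-j), by omega, ?_⟩
    rw [elt_eval0 (by omega)]
    exact congrArg _ (by omega)
  · refine ⟨4*(n-1-j)+1, by omega, ?_⟩
    rw [elt_eval1 (by omega)]
    exact congrArg _ (by omega)
  · refine ⟨4*(n-2-m)+3, by omega, ?_⟩
    rw [elt_eval3 (by omega)]
    exact congrArg _ (by omega)

lemma classification {n : ℕ} (hn : 2 ≤ n) {x y : Finset (Fin (2*n))}
    (hx : x ∈ LSet n) (hy : y ∈ LSet n)
    (hnc : ¬ LLE n x y) (hnc' : ¬ LLE n y x) :
    ∃ i, 1 ≤ i ∧ i ≤ n-1 ∧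
      ((x = Iset n i ∧ y = Kset n (i-1)) ∨ (y = Iset n i ∧ x = Kset n (i-1))) := by
  obtain ⟨r, hr, rfl⟩ := mem_LSet_rank hn hx
  obtain ⟨r', hr', rfl⟩ := mem_LSet_rank hn hy
  rcases le_total r r' with h | h
  · by_cases hb : r % 4 = 2 ∧ r' = r + 1
    · refine ⟨n-1-r/4, by omega, by omega, Or.inl ⟨?_, ?_⟩⟩
      · rw [elt_eval2 hb.1]
      · rw [hb.2, elt_eval3 (by omega), (by omega : (r+1)/4 = r/4)]
        exact congrArg _ (by omega)
    · exfalso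
      apply hnc
      have := chainElt hn (r'-r) r (by omega) (by omega)
      rwa [show r+(r'-r) = r' by omega] at this
  · by_cases hb : r' % 4 = 2 ∧ r = r' + 1
    · refine ⟨n-1-r'/4, by omega, by omega, Or.inr ⟨?_, ?_⟩⟩
      · rw [elt_eval2 hb.1]
      · rw [hb.2, elt_eval3 (by omega), (by omega : (r'+1)/4 = r'/4)]
        exact congrArg _ (by omega)
    · exfalso
      apply hnc'
      have := chainElt hn (r-r') r' (by omega) (by omega)
      rwa [show r'+(r-r') = r by omega] at this

lemma elt_comp {n : ℕ} (hn : 2 ≤ n) {r : ℕ} (hr : r ≤ 4*n-3) (hm : r % 4 = 0 ∨ r % 4 = 1)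
    {y : Finset (Fin (2*n))} (hy : y ∈ LSet n) :
    LLE n (elt n r) y ∨ LLE n y (elt n r) := by
  obtain ⟨r', hr', rfl⟩ := mem_LSet_rank hn hy
  rcases le_total r r' with h | h
  · left
    have := chainElt hn (r'-r) r (by omega) (by omega)
    rwa [show r+(r'-r) = r' by omega] at this
  · right
    have := chainElt hn (r-r') r' (by omega) (by omega)
    rwa [show r'+(r-r') = r by omega] at this

end Poset

-- ==================== the rank function κ ====================
section Kappa

open Classical in
/-- rank function on column sets -/
noncomputable def kap (n : ℕ) (C : Finset (Fin (2*n))) : ℕ :=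
  if (∃ x ∈ C, (x:ℕ) + 1 = n) then
    (if (∃ x ∈ C, (x:ℕ) + 1 = n + 1) then 4*(n-2-mC n C (n-1))+3
      else 4*(n-1-mC n C (n-1)))
  else
    (if (∃ x ∈ C, (x:ℕ) + 1 = n + 1) then 4*(n-1-mC n C (n-1))+1
      else 4*(n-1-mC n C (n-1))+2)

lemma mC_Iset {n i : ℕ} (hn : 2 ≤ n) (hi : i ≤ n-1) : mC n (Iset n i) (n-1) = i := by
  unfold mC
  rw [Finset.filter_true_of_mem (fun x hx => ?_), card_Iset n i (by omega)]
  simp only [Iset, Finset.mem_filter] at hx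
  omega

lemma mC_Jset {n j : ℕ} (hn : 2 ≤ n) (hj : j ≤ n-1) : mC n (Jset n j) (n-1) = j := by
  unfold mC
  have he : (Jset n j).filter (fun x : Fin (2*n) => (x:ℕ)+1 ≤ n-1) = Iset n j := by
    ext x
    simp only [Jset, Iset, Finset.mem_filter, Finset.mem_univ, true_and]
    omega
  rw [he, card_Iset n j (by omega)]

lemma mC_JPset {n j : ℕ} (hn : 2 ≤ n) (hj : j ≤ n-1) : mC n (JPset n j) (n-1) = j := by
  unfold mC
  have he : (JPset n j).filter (fun x : Fin (2*n) => (x:ℕ)+1 ≤ n-1) = Iset n j := by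
    ext x
    simp only [JPset, Iset, Finset.mem_filter, Finset.mem_univ, true_and]
    omega
  rw [he, card_Iset n j (by omega)]

lemma mC_Kset {n m : ℕ} (hn : 2 ≤ n) (hm : m ≤ n-2) : mC n (Kset n m) (n-1) = m := by
  unfold mC
  have he : (Kset n m).filter (fun x : Fin (2*n) => (x:ℕ)+1 ≤ n-1) = Iset n m := by
    ext x
    simp only [Kset, Iset, Finset.mem_filter, Finset.mem_univ, true_and]
    omega
  rw [he, card_Iset n m (by omega)]

lemma hasN_Iset {n i : ℕ} (hi : i ≤ n-1) : ¬ ∃ x ∈ Iset n i, (x:ℕ) + 1 = n := by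
  rintro ⟨x, hx, hx2⟩
  simp only [Iset, Finset.mem_filter, Finset.mem_univ, true_and] at hx
  omega

lemma hasN1_Iset {n i : ℕ} (hi : i ≤ n-1) : ¬ ∃ x ∈ Iset n i, (x:ℕ) + 1 = n + 1 := by
  rintro ⟨x, hx, hx2⟩
  simp only [Iset, Finset.mem_filter, Finset.mem_univ, true_and] at hx
  omega

lemma hasN_Jset {n j : ℕ} (hn : 2 ≤ n) (hj : j ≤ n-1) : ∃ x ∈ Jset n j, (x:ℕ) + 1 = n :=
  ⟨⟨n-1, by omega⟩, by
    simp only [Jset, Finset.mem_filter, Finset.mem_univ, true_and, val_mk']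
    omega, by rw [val_mk']; omega⟩

lemma hasN1_Jset {n j : ℕ} (hj : j ≤ n-1) : ¬ ∃ x ∈ Jset n j, (x:ℕ) + 1 = n + 1 := by
  rintro ⟨x, hx, hx2⟩
  simp only [Jset, Finset.mem_filter, Finset.mem_univ, true_and] at hx
  omega

lemma hasN_JPset {n j : ℕ} (hj : j ≤ n-1) : ¬ ∃ x ∈ JPset n j, (x:ℕ) + 1 = n := by
  rintro ⟨x, hx, hx2⟩
  simp only [JPset, Finset.mem_filter, Finset.mem_univ, true_and] at hx
  omega

lemma hasN1_JPset {n j : ℕ} (hn : 2 ≤ n) (hj : j ≤ n-1) :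
    ∃ x ∈ JPset n j, (x:ℕ) + 1 = n + 1 :=
  ⟨⟨n, by omega⟩, by
    simp only [JPset, Finset.mem_filter, Finset.mem_univ, true_and, val_mk']
    exact Or.inr trivial, by rw [val_mk']⟩

lemma hasN_Kset {n m : ℕ} (hn : 2 ≤ n) (hm : m ≤ n-2) : ∃ x ∈ Kset n m, (x:ℕ) + 1 = n :=
  ⟨⟨n-1, by omega⟩, by
    simp only [Kset, Finset.mem_filter, Finset.mem_univ, true_and, val_mk']
    omega, by rw [val_mk']; omega⟩

lemma hasN1_Kset {n m : ℕ} (hn : 2 ≤ n) (hm : m ≤ n-2) :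
    ∃ x ∈ Kset n m, (x:ℕ) + 1 = n + 1 :=
  ⟨⟨n, by omega⟩, by
    simp only [Kset, Finset.mem_filter, Finset.mem_univ, true_and, val_mk']
    exact Or.inr (Or.inr trivial), by rw [val_mk']⟩

lemma kap_I {n i : ℕ} (hn : 2 ≤ n) (hi : i ≤ n-1) :
    kap n (Iset n i) = 4*(n-1-i)+2 := by
  rw [kap, if_neg (hasN_Iset hi), if_neg (hasN1_Iset hi), mC_Iset hn hi]

lemma kap_J {n j : ℕ} (hn : 2 ≤ n) (hj : j ≤ n-1) :
    kap n (Jset n j) = 4*(n-1-j) := by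
  rw [kap, if_pos (hasN_Jset hn hj), if_neg (hasN1_Jset hj), mC_Jset hn hj]

lemma kap_JP {n j : ℕ} (hn : 2 ≤ n) (hj : j ≤ n-1) :
    kap n (JPset n j) = 4*(n-1-j)+1 := by
  rw [kap, if_neg (hasN_JPset hj), if_pos (hasN1_JPset hn hj), mC_JPset hn hj]

lemma kap_K {n m : ℕ} (hn : 2 ≤ n) (hm : m ≤ n-2) :
    kap n (Kset n m) = 4*(n-2-m)+3 := by
  rw [kap, if_pos (hasN_Kset hn hm), if_pos (hasN1_Kset hn hm), mC_Kset hn hm]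

lemma kap_lt_of_LGen {n : ℕ} (hn : 2 ≤ n) {x y : Finset (Fin (2*n))} (h : LGen n x y) :
    kap n x < kap n y := by
  obtain ⟨i, h1, h2, hc⟩ := h
  rcases hc with ⟨rfl,rfl⟩|⟨rfl,rfl⟩|⟨rfl,rfl⟩|⟨rfl,rfl⟩|⟨rfl,rfl⟩|⟨rfl,rfl⟩
  · rw [kap_J hn h2, kap_JP hn h2]; omega
  · rw [kap_JP hn h2, kap_I hn h2]; omega
  · rw [kap_JP hn h2, kap_K hn (by omega)]; omega
  · rw [kap_I hn h2, kap_J hn (by omega)]; omega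
  · rw [kap_K hn (by omega), kap_J hn (by omega)]; omega
  · rw [kap_J hn (by omega), kap_JP hn (by omega)]; omega

lemma kap_mono_LLE {n : ℕ} (hn : 2 ≤ n) {x y : Finset (Fin (2*n))} (h : LLE n x y) :
    kap n x ≤ kap n y := by
  induction h with
  | refl => exact le_refl _
  | tail _ hstep ih => exact ih.trans (le_of_lt (kap_lt_of_LGen hn hstep))

lemma lle_of_comp_le {n : ℕ} (hn : 2 ≤ n) {x y : Finset (Fin (2*n))}
    (hcomp : LLE n x y ∨ LLE n y x) (hκ : kap n x ≤ kap n y) : LLE n x y := by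
  rcases hcomp with h | h
  · exact h
  · rcases h.cases_head with rfl | ⟨z, hstep, hrest⟩
    · exact Relation.ReflTransGen.refl
    · have h1 := kap_lt_of_LGen hn hstep
      have h2 := kap_mono_LLE hn hrest
      omega

end Kappa

-- ==================== main argument ====================
section Main

/-- comparability in `𝓛` -/
def comp (n : ℕ) (x y : Finset (Fin (2*n))) : Prop := LLE n x y ∨ LLE n y x

lemma comp_J {n j : ℕ} (hn : 2 ≤ n) (hj : j ≤ n-1) {y : Finset (Fin (2*n))}
    (hy : y ∈ LSet n) : comp n (Jset n j) y := by
  have h := elt_comp hn (r := 4*(n-1-j)) (by omega) (Or.inl (by omega)) hy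
  rwa [elt_eval0 (by omega), (show n-1-(4*(n-1-j))/4 = j by omega)] at h

lemma comp_JP {n j : ℕ} (hn : 2 ≤ n) (hj : j ≤ n-1) {y : Finset (Fin (2*n))}
    (hy : y ∈ LSet n) : comp n (JPset n j) y := by
  have h := elt_comp hn (r := 4*(n-1-j)+1) (by omega) (Or.inr (by omega)) hy
  rwa [elt_eval1 (by omega), (show n-1-(4*(n-1-j)+1)/4 = j by omega)] at h

open Classical in
/-- number of incomparable pairs -/
noncomputable def mu (n : ℕ) : List (Finset (Fin (2*n))) → ℕ
  | [] => 0
  | x :: t => (t.countP (fun y => decide (¬ comp n x y))) + mu n t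

open Classical in
lemma mu_cons (n : ℕ) (x : Finset (Fin (2*n))) (t : List (Finset (Fin (2*n)))) :
    mu n (x :: t) = (t.countP (fun y => decide (¬ comp n x y))) + mu n t := rfl

open Classical in
lemma mu_perm {n : ℕ} {l l' : List (Finset (Fin (2*n)))} (h : l.Perm l') :
    mu n l = mu n l' := by
  induction h with
  | nil => rfl
  | cons x h ih => rw [mu_cons, mu_cons, h.countP_eq, ih]
  | swap x y t =>
    rw [mu_cons, mu_cons, mu_cons, mu_cons, List.countP_cons, List.countP_cons]
    have hxy : decide (¬ comp n x y) = decide (¬ comp n y x) :=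
      decide_eq_decide.2 ⟨fun h hc => h (Or.symm hc), fun h hc => h (Or.symm hc)⟩
    rw [hxy]
    omega
  | trans _ _ ih1 ih2 => exact ih1.trans ih2

open Classical in
lemma pairwise_of_mu_eq_zero {n : ℕ} {l : List (Finset (Fin (2*n)))} (h : mu n l = 0) :
    l.Pairwise (comp n) := by
  induction l with
  | nil => exact List.Pairwise.nil
  | cons x t ih =>
    rw [mu_cons] at h
    have h1 : t.countP (fun y => decide (¬ comp n x y)) = 0 := by omega
    have h2 : mu n t = 0 := by omega
    refine List.pairwise_cons.2 ⟨fun y hy => ?_, ih h2⟩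
    have := List.countP_eq_zero.1 h1 y hy
    simpa using this

lemma exists_chain_of_pairwise {n : ℕ} (hn : 2 ≤ n) {l : List (Finset (Fin (2*n)))}
    (hp : l.Pairwise (comp n)) : ∃ l', l.Perm l' ∧ l'.Chain' (LLE n) := by
  classical
  set le : Finset (Fin (2*n)) → Finset (Fin (2*n)) → Bool :=
    fun x y => decide (kap n x ≤ kap n y) with hle
  refine ⟨l.mergeSort le, (l.mergeSort_perm le).symm, ?_⟩
  have hsorted := List.pairwise_mergeSort (le := le)
    (fun a b c h1 h2 => by simp only [hle, decide_eq_true_eq] at *; omega)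
    (fun a b => by simp only [hle]; rcases le_total (kap n a) (kap n b) with h | h <;> simp [h]) l
  have hp' : (l.mergeSort le).Pairwise (comp n) :=
    ((l.mergeSort_perm le).pairwise_iff (fun h => Or.symm h)).2 hp
  have hpw : (l.mergeSort le).Pairwise (LLE n) := by
    refine (hsorted.and hp').imp (fun {a b} hab => ?_)
    exact lle_of_comp_le hn hab.2 (by simpa [hle] using hab.1)
  exact hpw.isChain

lemma exists_perm_bad {α : Type*} {R : α → α → Prop} :
    ∀ {l : List α}, ¬ l.Pairwise R → ∃ x y t, l.Perm (x :: y :: t) ∧ ¬ R x y := by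
  classical
  intro l
  induction l with
  | nil => intro h; exact absurd List.Pairwise.nil h
  | cons a s ih =>
    intro h
    by_cases hs : s.Pairwise R
    · have hne : ¬ ∀ b ∈ s, R a b := fun hall => h (List.pairwise_cons.2 ⟨hall, hs⟩)
      push_neg at hne
      obtain ⟨b, hb, hnr⟩ := hne
      obtain ⟨s1, s2, rfl⟩ := List.append_of_mem hb
      exact ⟨a, b, s1 ++ s2, List.Perm.cons a List.perm_middle, hnr⟩
    · obtain ⟨x, y, t, hperm, hnr⟩ := ih hs
      exact ⟨x, y, a :: t, (hperm.cons a).trans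
        ((List.Perm.swap x a _).trans ((List.Perm.swap y a t).cons x)), hnr⟩

lemma stdMonomial_cons (n : ℕ) (C : Finset (Fin (2*n))) (l : List (Finset (Fin (2*n)))) :
    stdMonomial n (C :: l) = deltaFn n C * stdMonomial n l := by
  funext X
  simp [stdMonomial, Pi.mul_apply]

lemma stdMonomial_perm {n : ℕ} {l l' : List (Finset (Fin (2*n)))} (h : l.Perm l') :
    stdMonomial n l = stdMonomial n l' := by
  funext X
  exact (h.map (fun C => deltaFn n C X)).prod_eq

lemma stdMonomial_append (n : ℕ) (l1 l2 : List (Finset (Fin (2*n)))) :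
    stdMonomial n (l1 ++ l2) = stdMonomial n l1 * stdMonomial n l2 := by
  funext X
  simp [stdMonomial, Pi.mul_apply]

lemma stdMonomial_nil (n : ℕ) : stdMonomial n [] = 1 := by
  funext X
  simp [stdMonomial]

/-- membership of new sets in `𝓛` -/
lemma Jset_mem_LSet {n j : ℕ} (hj : j ≤ n-1) : Jset n j ∈ LSet n :=
  Or.inr (Or.inl ⟨j, hj, rfl⟩)

lemma JPset_mem_LSet {n j : ℕ} (hj : j ≤ n-1) : JPset n j ∈ LSet n :=
  Or.inr (Or.inr (Or.inl ⟨j, hj, rfl⟩))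

/-- the standard-monomial span -/
noncomputable def SMspan (n : ℕ) : Submodule ℂ (Matrix (Fin (2*n)) (Fin (2*n)) ℂ → ℂ) :=
  Submodule.span ℂ
    {g | ∃ l : List (Finset (Fin (2*n))), IsMultichain n l ∧ g = stdMonomial n l}

lemma mem_span_of_pairwise {n : ℕ} (hn : 2 ≤ n) {l : List (Finset (Fin (2*n)))}
    (hmem : ∀ C ∈ l, C ∈ LSet n) (hp : l.Pairwise (comp n)) :
    stdMonomial n l ∈ SMspan n := by
  obtain ⟨l', hperm, hchain⟩ := exists_chain_of_pairwise hn hp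
  rw [stdMonomial_perm hperm]
  exact Submodule.subset_span
    ⟨l', ⟨fun C hC => hmem C (hperm.mem_iff.2 hC), hchain⟩, rfl⟩

open Classical in
lemma key_lemma {n : ℕ} (hn : 2 ≤ n) :
    ∀ (N : ℕ) (l : List (Finset (Fin (2*n)))), mu n l ≤ N → (∀ C ∈ l, C ∈ LSet n) →
      stdMonomial n l ∈ SMspan n := by
  intro N
  induction N with
  | zero =>
    intro l h0 hmem
    exact mem_span_of_pairwise hn hmem (pairwise_of_mu_eq_zero (Nat.le_zero.mp h0))
  | succ N ih =>
    intro l hμ hmem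
    by_cases hp : l.Pairwise (comp n)
    · exact mem_span_of_pairwise hn hmem hp
    obtain ⟨x, y, t, hperm, hnc⟩ := exists_perm_bad hp
    have hmem' : ∀ C ∈ (x :: y :: t), C ∈ LSet n := fun C hC => hmem C (hperm.mem_iff.2 hC)
    have hx : x ∈ LSet n := hmem' x (by simp)
    have hy : y ∈ LSet n := hmem' y (by simp)
    have htm : ∀ C ∈ t, C ∈ LSet n := fun C hC => hmem' C (by simp [hC])
    have hnc1 : ¬ LLE n x y := fun h => hnc (Or.inl h)
    have hnc2 : ¬ LLE n y x := fun h => hnc (Or.inr h)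
    obtain ⟨i, hi1, hi2, hcase⟩ := classification hn hx hy hnc1 hnc2
    -- permute so that the list starts with I_i, K_{i-1}
    have hperm2 : l.Perm (Iset n i :: Kset n (i-1) :: t) := by
      rcases hcase with ⟨rfl, rfl⟩ | ⟨rfl, rfl⟩
      · exact hperm
      · exact hperm.trans (List.Perm.swap (Iset n i) (Kset n (i-1)) t)
    -- straightening relation as functions
    have hfun : deltaFn n (Iset n i) * deltaFn n (Kset n (i-1))
        = deltaFn n (Jset n (i-1)) * deltaFn n (JPset n i)
          - deltaFn n (JPset n (i-1)) * deltaFn n (Jset n i) := by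
      funext X
      have hp := plucker_delta n (i-1) hn (by omega) X
      rw [show i-1+1 = i by omega] at hp
      simpa [Pi.mul_apply, Pi.sub_apply] using hp
    have hstd : stdMonomial n l
        = stdMonomial n (Jset n (i-1) :: JPset n i :: t)
          - stdMonomial n (JPset n (i-1) :: Jset n i :: t) := by
      rw [stdMonomial_perm hperm2, stdMonomial_cons, stdMonomial_cons, stdMonomial_cons,
        stdMonomial_cons, stdMonomial_cons, stdMonomial_cons, ← mul_assoc, hfun]
      ring
    rw [hstd]
    -- μ decreases
    have hmut : mu n t + 1 ≤ N + 1 := by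
      have h1 := mu_perm hperm
      rw [mu_cons, mu_cons] at h1
      have h2 : List.countP (fun z => decide (¬ comp n x z)) (y :: t)
          = List.countP (fun z => decide (¬ comp n x z)) t + 1 :=
        List.countP_cons_of_pos (by simpa using hnc)
      omega
    have hcount : ∀ (w : Finset (Fin (2*n))) (hw : w = Jset n (i-1) ∨ w = JPset n (i-1)
        ∨ w = Jset n i ∨ w = JPset n i) (s : List (Finset (Fin (2*n)))),
        (∀ C ∈ s, C ∈ LSet n) → List.countP (fun z => decide (¬ comp n w z)) s = 0 := by
      intro w hw s hs
      refine List.countP_eq_zero.2 (fun a ha => ?_)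
      have hcw : comp n w a := by
        rcases hw with rfl | rfl | rfl | rfl
        · exact comp_J hn (by omega) (hs a ha)
        · exact comp_JP hn (by omega) (hs a ha)
        · exact comp_J hn (by omega) (hs a ha)
        · exact comp_JP hn (by omega) (hs a ha)
      simp [hcw]
    have hmem1 : ∀ C ∈ (JPset n i :: t), C ∈ LSet n := by
      intro C hC
      rcases List.mem_cons.1 hC with rfl | hC
      · exact JPset_mem_LSet hi2
      · exact htm C hC
    have hmem2 : ∀ C ∈ (Jset n i :: t), C ∈ LSet n := by
      intro C hC
      rcases List.mem_cons.1 hC with rfl | hC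
      · exact Jset_mem_LSet hi2
      · exact htm C hC
    have hmu1 : mu n (Jset n (i-1) :: JPset n i :: t) ≤ N := by
      rw [mu_cons, mu_cons, hcount _ (Or.inl rfl) _ hmem1,
        hcount _ (Or.inr (Or.inr (Or.inr rfl))) _ htm]
      omega
    have hmu2 : mu n (JPset n (i-1) :: Jset n i :: t) ≤ N := by
      rw [mu_cons, mu_cons, hcount _ (Or.inr (Or.inl rfl)) _ hmem2,
        hcount _ (Or.inr (Or.inr (Or.inl rfl))) _ htm]
      omega
    have hm1 : ∀ C ∈ (Jset n (i-1) :: JPset n i :: t), C ∈ LSet n := by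
      intro C hC
      rcases List.mem_cons.1 hC with rfl | hC
      · exact Jset_mem_LSet (by omega)
      · exact hmem1 C hC
    have hm2 : ∀ C ∈ (JPset n (i-1) :: Jset n i :: t), C ∈ LSet n := by
      intro C hC
      rcases List.mem_cons.1 hC with rfl | hC
      · exact JPset_mem_LSet (by omega)
      · exact hmem2 C hC
    exact sub_mem (ih _ hmu1 hm1) (ih _ hmu2 hm2)

end Main

/-- the subalgebra of polynomial functions on `M_{2n}(ℂ)` generated by the
`δ_C`, `C ∈ 𝓛`, is spanned as a ℂ-vector space by the standard monomials `δ_Δ`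
(including the empty product `1`). -/
theorem statement3 (n : ℕ) (hn : 2 ≤ n) :
    Subalgebra.toSubmodule
        (Algebra.adjoin ℂ
          {g : Matrix (Fin (2*n)) (Fin (2*n)) ℂ → ℂ | ∃ C ∈ LSet n, g = deltaFn n C}) =
      Submodule.span ℂ
        {g : Matrix (Fin (2*n)) (Fin (2*n)) ℂ → ℂ |
          ∃ l : List (Finset (Fin (2*n))), IsMultichain n l ∧ g = stdMonomial n l} := by
  classical
  apply le_antisymm
  · rw [Algebra.adjoin_eq_span]
    rw [Submodule.span_le]
    intro g hg
    have hrep : ∃ l : List (Finset (Fin (2*n))),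
        (∀ C ∈ l, C ∈ LSet n) ∧ g = stdMonomial n l := by
      refine Submonoid.closure_induction ?_ ?_ ?_ hg
      · rintro f ⟨C, hC, rfl⟩
        refine ⟨[C], by simpa using hC, ?_⟩
        funext X
        simp [stdMonomial]
      · exact ⟨[], by simp, (stdMonomial_nil n).symm⟩
      · rintro f1 f2 _ _ ⟨l1, hm1, rfl⟩ ⟨l2, hm2, rfl⟩
        refine ⟨l1 ++ l2, fun C hC => ?_, (stdMonomial_append n l1 l2).symm⟩
        rcases List.mem_append.1 hC with h | h
        · exact hm1 C h
        · exact hm2 C h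
    obtain ⟨l, hmem, rfl⟩ := hrep
    exact key_lemma hn (mu n l) l (le_refl _) hmem
  · rw [Submodule.span_le]
    rintro g ⟨l, hmc, rfl⟩
    have : ∀ (l : List (Finset (Fin (2*n)))), IsMultichain n l →
        stdMonomial n l ∈ Algebra.adjoin ℂ
          {g : Matrix (Fin (2*n)) (Fin (2*n)) ℂ → ℂ | ∃ C ∈ LSet n, g = deltaFn n C} := by
      intro l
      induction l with
      | nil =>
        intro _
        rw [stdMonomial_nil]
        exact one_mem _
      | cons C t ih =>
        rintro ⟨hmem, hchain⟩
        rw [stdMonomial_cons]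
        refine mul_mem (Algebra.subset_adjoin ⟨C, hmem C List.mem_cons_self, rfl⟩)
          (ih ⟨fun D hD => hmem D (List.mem_cons_of_mem _ hD), hchain.tail⟩)
    exact this l hmc

end SpBranch
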